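/- arXiv:1405.3347 — 4 statements merged into one kernel-verified Lean document; each statement's English description precedes it below -/
import Mathlib

section
/- The ring R = ℤ₉[u]/(u² - u) has exactly 9 ideals, namely (1), (u+2), (u+3), (u-1), (3), (u), (3u-3), (3u), and (0). -/
open Polynomial

noncomputable section

/-- The ring `R = ℤ₉[u]/(u² - u)`. -/
abbrev R9 : Type := Polynomial (ZMod 9) ⧸ Ideal.span {(X : Polynomial (ZMod 9)) ^ 2 - X}

/-- The element `u` of `R`, the image of `X`. -/
def uu : R9 := Ideal.Quotient.mk _ (X : Polynomial (ZMod 9))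

/-- The canonical embedding `ℤ₉ → R`. -/
def ι : ZMod 9 →+* R9 :=
  (Ideal.Quotient.mk _).comp (Polynomial.C : ZMod 9 →+* Polynomial (ZMod 9))
/-- The nine ideals listed in the paper: `(1), (u+2), (u+3), (u-1), (3), (u), (3u-3), (3u), (0)`. -/
def idealList : Set (Ideal R9) :=
  {Ideal.span {1}, Ideal.span {uu + 2}, Ideal.span {uu + 3}, Ideal.span {uu - 1},
   Ideal.span {3}, Ideal.span {uu}, Ideal.span {3 * uu - 3}, Ideal.span {3 * uu},
   Ideal.span {0}}

/-! ### Auxiliary: the isomorphism `R9 ≃ ZMod 9 × ZMod 9` -/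

def evh : Polynomial (ZMod 9) →+* ZMod 9 × ZMod 9 :=
  (Polynomial.evalRingHom 1).prod (Polynomial.evalRingHom 0)

lemma ker_le : Ideal.span {(X : Polynomial (ZMod 9)) ^ 2 - X} ≤ RingHom.ker evh := by
  rw [Ideal.span_le, Set.singleton_subset_iff]
  simp [evh, RingHom.mem_ker, Prod.ext_iff]

def φ0 : R9 →+* ZMod 9 × ZMod 9 := Ideal.Quotient.lift _ evh ker_le

lemma φ0_bij : Function.Bijective φ0 := by
  constructor
  · rw [injective_iff_map_eq_zero]
    intro a
    obtain ⟨f, rfl⟩ := Ideal.Quotient.mk_surjective a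
    intro h
    have h1 : f.eval 1 = 0 := congrArg Prod.fst h
    have h0 : f.eval 0 = 0 := congrArg Prod.snd h
    rw [Ideal.Quotient.eq_zero_iff_mem, Ideal.mem_span_singleton]
    obtain ⟨g, hg⟩ := (Polynomial.X_dvd_iff (f := f)).mpr
      (by rwa [Polynomial.coeff_zero_eq_eval_zero])
    have hg1 : g.eval 1 = 0 := by
      have := hg ▸ h1; simpa using this
    obtain ⟨k, hk⟩ := (Polynomial.dvd_iff_isRoot (p := g) (a := (1 : ZMod 9))).mpr hg1
    refine ⟨k, ?_⟩
    rw [hg, hk]; simp [Polynomial.C_1]; ring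
  · rintro ⟨a, b⟩
    refine ⟨Ideal.Quotient.mk _ (C b + C (a - b) * X), ?_⟩
    simp [φ0, evh, Prod.ext_iff]

/-! ### Divisibility bookkeeping in `ZMod 9 × ZMod 9` -/

def dv (a b : ZMod 9 × ZMod 9) : Prop := ∃ c, b = a * c

instance (a b : ZMod 9 × ZMod 9) : Decidable (dv a b) := Fintype.decidableExistsFintype

lemma dv_iff {a b : ZMod 9 × ZMod 9} : dv a b ↔ a ∣ b := Iff.rfl

set_option maxRecDepth 100000 in
lemma classify : ∀ v : ZMod 9 × ZMod 9,
    (dv (1,1) v ∧ dv v (1,1)) ∨ (dv (3,2) v ∧ dv v (3,2)) ∨ (dv (4,3) v ∧ dv v (4,3)) ∨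
    (dv (0,8) v ∧ dv v (0,8)) ∨ (dv (3,3) v ∧ dv v (3,3)) ∨ (dv (1,0) v ∧ dv v (1,0)) ∨
    (dv (0,6) v ∧ dv v (0,6)) ∨ (dv (3,0) v ∧ dv v (3,0)) ∨ (dv (0,0) v ∧ dv v (0,0)) := by
  decide

/-! ### Every ideal of the product ring is principal -/

instance : IsPrincipalIdealRing (ZMod 9) :=
  IsPrincipalIdealRing.of_surjective (Int.castRingHom (ZMod 9)) ZMod.intCast_surjective

lemma prod_span (a b : ZMod 9) :
    Ideal.prod (Ideal.span {a}) (Ideal.span {b}) = Ideal.span {(a, b)} := by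
  ext ⟨x, y⟩
  rw [Ideal.mem_prod]
  simp only [Ideal.mem_span_singleton']
  constructor
  · rintro ⟨⟨c, rfl⟩, ⟨d, rfl⟩⟩; exact ⟨(c, d), rfl⟩
  · rintro ⟨⟨c, d⟩, h⟩
    exact ⟨⟨c, (Prod.ext_iff.1 h.symm).1.symm⟩, ⟨d, (Prod.ext_iff.1 h.symm).2.symm⟩⟩

lemma exists_gen (J : Ideal (ZMod 9 × ZMod 9)) : ∃ v, J = Ideal.span {v} := by
  obtain ⟨a, ha⟩ := Submodule.IsPrincipal.principal (Ideal.map (RingHom.fst _ _) J)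
  obtain ⟨b, hb⟩ := Submodule.IsPrincipal.principal (Ideal.map (RingHom.snd _ _) J)
  refine ⟨(a, b), ?_⟩
  rw [Ideal.ideal_prod_eq J, ha, hb]
  exact prod_span a b

/-! ### Transfer along `φ0` -/

lemma key (g : R9) (v : ZMod 9 × ZMod 9) (h1 : dv (φ0 g) v) (h2 : dv v (φ0 g)) :
    Ideal.comap φ0 (Ideal.span {v}) = Ideal.span {g} := by
  have hsp : Ideal.span {v} = Ideal.span {φ0 g} :=
    le_antisymm (Ideal.span_singleton_le_span_singleton.2 h1)
      (Ideal.span_singleton_le_span_singleton.2 h2)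
  have hmap : Ideal.map φ0 (Ideal.span {g}) = Ideal.span {φ0 g} := by
    rw [Ideal.map_span, Set.image_singleton]
  rw [hsp, ← hmap, Ideal.comap_map_of_bijective _ φ0_bij]

lemma span_ne (g h : R9) (pg ph : ZMod 9 × ZMod 9) (hg : φ0 g = pg) (hh : φ0 h = ph)
    (hd : ¬ (dv pg ph ∧ dv ph pg)) : Ideal.span {g} ≠ Ideal.span {h} := by
  intro e
  apply hd
  constructor
  · have : h ∈ Ideal.span {g} := e ▸ Ideal.subset_span rfl
    have : g ∣ h := Ideal.mem_span_singleton.1 this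
    exact hg ▸ hh ▸ dv_iff.2 (map_dvd φ0 this)
  · have : g ∈ Ideal.span {h} := e.symm ▸ Ideal.subset_span rfl
    have : h ∣ g := Ideal.mem_span_singleton.1 this
    exact hg ▸ hh ▸ dv_iff.2 (map_dvd φ0 this)

/-! ### Values of `φ0` on the generators -/

lemma hφ_u : φ0 uu = (1, 0) := by
  simp [φ0, uu, evh, Prod.ext_iff]

lemma hφ_one : φ0 (1 : R9) = (1, 1) := by rw [map_one]; rfl
lemma hφ_u2 : φ0 (uu + 2) = (3, 2) := by rw [map_add, hφ_u, map_ofNat]; decide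
lemma hφ_u3 : φ0 (uu + 3) = (4, 3) := by rw [map_add, hφ_u, map_ofNat]; decide
lemma hφ_um1 : φ0 (uu - 1) = (0, 8) := by rw [map_sub, hφ_u, map_one]; decide
lemma hφ_3 : φ0 (3 : R9) = (3, 3) := by rw [map_ofNat]; decide
lemma hφ_3um3 : φ0 (3 * uu - 3) = (0, 6) := by
  rw [map_sub, map_mul, hφ_u, map_ofNat]; decide
lemma hφ_3u : φ0 (3 * uu) = (3, 0) := by rw [map_mul, hφ_u, map_ofNat]; decide
lemma hφ_0 : φ0 (0 : R9) = (0, 0) := by rw [map_zero]; rfl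

theorem stmt3 :
    (Set.univ : Set (Ideal R9)) = idealList ∧ idealList.ncard = 9 := by
  constructor
  · ext I
    simp only [Set.mem_univ, true_iff, idealList, Set.mem_insert_iff, Set.mem_singleton_iff]
    obtain ⟨v, hv⟩ := exists_gen (Ideal.map φ0 I)
    have hI : I = Ideal.comap φ0 (Ideal.span {v}) := by
      rw [← hv, Ideal.comap_map_of_bijective _ φ0_bij]
    rcases classify v with ⟨h1, h2⟩ | ⟨h1, h2⟩ | ⟨h1, h2⟩ | ⟨h1, h2⟩ | ⟨h1, h2⟩ |
      ⟨h1, h2⟩ | ⟨h1, h2⟩ | ⟨h1, h2⟩ | ⟨h1, h2⟩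
    · exact Or.inl (by rw [hI, key 1 v (hφ_one ▸ h1) (hφ_one ▸ h2)])
    · exact Or.inr (Or.inl (by rw [hI, key (uu + 2) v (hφ_u2 ▸ h1) (hφ_u2 ▸ h2)]))
    · exact Or.inr (Or.inr (Or.inl (by
        rw [hI, key (uu + 3) v (hφ_u3 ▸ h1) (hφ_u3 ▸ h2)])))
    · exact Or.inr (Or.inr (Or.inr (Or.inl (by
        rw [hI, key (uu - 1) v (hφ_um1 ▸ h1) (hφ_um1 ▸ h2)]))))
    · exact Or.inr (Or.inr (Or.inr (Or.inr (Or.inl (by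
        rw [hI, key 3 v (hφ_3 ▸ h1) (hφ_3 ▸ h2)])))))
    · exact Or.inr (Or.inr (Or.inr (Or.inr (Or.inr (Or.inl (by
        rw [hI, key uu v (hφ_u ▸ h1) (hφ_u ▸ h2)]))))))
    · exact Or.inr (Or.inr (Or.inr (Or.inr (Or.inr (Or.inr (Or.inl (by
        rw [hI, key (3 * uu - 3) v (hφ_3um3 ▸ h1) (hφ_3um3 ▸ h2)])))))))
    · exact Or.inr (Or.inr (Or.inr (Or.inr (Or.inr (Or.inr (Or.inr (Or.inl (by
        rw [hI, key (3 * uu) v (hφ_3u ▸ h1) (hφ_3u ▸ h2)]))))))))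
    · exact Or.inr (Or.inr (Or.inr (Or.inr (Or.inr (Or.inr (Or.inr (Or.inr (by
        rw [hI, key 0 v (hφ_0 ▸ h1) (hφ_0 ▸ h2)]))))))))
  · have f1 : ({Ideal.span {0}} : Set (Ideal R9)).Finite := Set.finite_singleton _
    have f2 := f1.insert (Ideal.span {3 * uu})
    have f3 := f2.insert (Ideal.span {3 * uu - 3})
    have f4 := f3.insert (Ideal.span {uu})
    have f5 := f4.insert (Ideal.span {(3 : R9)})
    have f6 := f5.insert (Ideal.span {uu - 1})
    have f7 := f6.insert (Ideal.span {uu + 3})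
    have f8 := f7.insert (Ideal.span {uu + 2})
    unfold idealList
    rw [Set.ncard_insert_of_notMem ?_ f8, Set.ncard_insert_of_notMem ?_ f7,
      Set.ncard_insert_of_notMem ?_ f6, Set.ncard_insert_of_notMem ?_ f5,
      Set.ncard_insert_of_notMem ?_ f4, Set.ncard_insert_of_notMem ?_ f3,
      Set.ncard_insert_of_notMem ?_ f2, Set.ncard_insert_of_notMem ?_ f1,
      Set.ncard_singleton]
    · simp only [Set.mem_singleton_iff]
      exact span_ne _ _ _ _ hφ_3u hφ_0 (by decide)
    · simp only [Set.mem_insert_iff, Set.mem_singleton_iff]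
      push_neg
      exact ⟨span_ne _ _ _ _ hφ_3um3 hφ_3u (by decide),
        span_ne _ _ _ _ hφ_3um3 hφ_0 (by decide)⟩
    · simp only [Set.mem_insert_iff, Set.mem_singleton_iff]
      push_neg
      exact ⟨span_ne _ _ _ _ hφ_u hφ_3um3 (by decide),
        span_ne _ _ _ _ hφ_u hφ_3u (by decide),
        span_ne _ _ _ _ hφ_u hφ_0 (by decide)⟩
    · simp only [Set.mem_insert_iff, Set.mem_singleton_iff]
      push_neg
      exact ⟨span_ne _ _ _ _ hφ_3 hφ_u (by decide),
        span_ne _ _ _ _ hφ_3 hφ_3um3 (by decide),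
        span_ne _ _ _ _ hφ_3 hφ_3u (by decide),
        span_ne _ _ _ _ hφ_3 hφ_0 (by decide)⟩
    · simp only [Set.mem_insert_iff, Set.mem_singleton_iff]
      push_neg
      exact ⟨span_ne _ _ _ _ hφ_um1 hφ_3 (by decide),
        span_ne _ _ _ _ hφ_um1 hφ_u (by decide),
        span_ne _ _ _ _ hφ_um1 hφ_3um3 (by decide),
        span_ne _ _ _ _ hφ_um1 hφ_3u (by decide),
        span_ne _ _ _ _ hφ_um1 hφ_0 (by decide)⟩
    · simp only [Set.mem_insert_iff, Set.mem_singleton_iff]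
      push_neg
      exact ⟨span_ne _ _ _ _ hφ_u3 hφ_um1 (by decide),
        span_ne _ _ _ _ hφ_u3 hφ_3 (by decide),
        span_ne _ _ _ _ hφ_u3 hφ_u (by decide),
        span_ne _ _ _ _ hφ_u3 hφ_3um3 (by decide),
        span_ne _ _ _ _ hφ_u3 hφ_3u (by decide),
        span_ne _ _ _ _ hφ_u3 hφ_0 (by decide)⟩
    · simp only [Set.mem_insert_iff, Set.mem_singleton_iff]
      push_neg
      exact ⟨span_ne _ _ _ _ hφ_u2 hφ_u3 (by decide),
        span_ne _ _ _ _ hφ_u2 hφ_um1 (by decide),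
        span_ne _ _ _ _ hφ_u2 hφ_3 (by decide),
        span_ne _ _ _ _ hφ_u2 hφ_u (by decide),
        span_ne _ _ _ _ hφ_u2 hφ_3um3 (by decide),
        span_ne _ _ _ _ hφ_u2 hφ_3u (by decide),
        span_ne _ _ _ _ hφ_u2 hφ_0 (by decide)⟩
    · simp only [Set.mem_insert_iff, Set.mem_singleton_iff]
      push_neg
      exact ⟨span_ne _ _ _ _ hφ_one hφ_u2 (by decide),
        span_ne _ _ _ _ hφ_one hφ_u3 (by decide),
        span_ne _ _ _ _ hφ_one hφ_um1 (by decide),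
        span_ne _ _ _ _ hφ_one hφ_3 (by decide),
        span_ne _ _ _ _ hφ_one hφ_u (by decide),
        span_ne _ _ _ _ hφ_one hφ_3um3 (by decide),
        span_ne _ _ _ _ hφ_one hφ_3u (by decide),
        span_ne _ _ _ _ hφ_one hφ_0 (by decide)⟩
end
end

section
/- Let A ∈ GL₂(ℤ₉) satisfy A·Aᵗ = λI for a unit λ ∈ ℤ₉, let Φ : Rⁿ → ℤ₉^{2n} be the associated Gray map, and let C be a linear code of length n over R. Then Φ(C^⊥) = Φ(C)^⊥, where duals are taken with respect to the Euclidean inner product. In particular, if C is self-dual then Φ(C) is self-dual over ℤ₉. -/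
open Polynomial

noncomputable section

/-- The decomposition map `R → ℤ₉ × ℤ₉`, sending `u·a + (1-u)·b` to `(a, b)`
(i.e. evaluation of a polynomial representative at `1` and at `0`). -/
def dec : R9 →+* ZMod 9 × ZMod 9 :=
  Ideal.Quotient.lift _ ((Polynomial.evalRingHom 1).prod (Polynomial.evalRingHom 0))
    (by
      intro a ha
      have h : Ideal.span {(X : Polynomial (ZMod 9)) ^ 2 - X} ≤
          RingHom.ker ((Polynomial.evalRingHom (1 : ZMod 9)).prod (Polynomial.evalRingHom 0)) := by
        rw [Ideal.span_le, Set.singleton_subset_iff]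
        simp [RingHom.mem_ker, Prod.ext_iff]
      exact h ha)

/-- The Gray image of a single coordinate: the row vector `(a, b)·A`. -/
def grayCoord (A : Matrix (Fin 2) (Fin 2) (ZMod 9)) (r : R9) : Fin 2 → ZMod 9 :=
  Matrix.vecMul ![(dec r).1, (dec r).2] A

/-- The Gray map `Φ : Rⁿ → ℤ₉^{2n}`. -/
def gray (n : ℕ) (A : Matrix (Fin 2) (Fin 2) (ZMod 9)) (c : Fin n → R9) :
    Fin n × Fin 2 → ZMod 9 :=
  fun p => grayCoord A (c p.1) p.2
def dualR (n : ℕ) (S : Set (Fin n → R9)) : Set (Fin n → R9) :=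
  {x | ∀ c ∈ S, ∑ i, x i * c i = 0}

/-- The Euclidean dual of a set of words over `ℤ₉`. -/
def dualZ {m : Type*} [Fintype m] (S : Set (m → ZMod 9)) : Set (m → ZMod 9) :=
  {x | ∀ c ∈ S, ∑ i, x i * c i = 0}

/-! Because `A Aᵀ = λ I`, the Gray map scales inner products through the trace
`tr : R → ℤ₉, u a + (1 - u) b ↦ a + b`: `Φ x · Φ y = λ tr (x · y)`. This gives `Φ(C^⊥) ⊆ Φ(C)^⊥`.
Conversely, `Φ` is onto because `A` is invertible, and if `Φ x ⊥ Φ(C)` then `tr (r (x · c)) = 0`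
for all `r ∈ R`, `c ∈ C`, since `C` is an `R`-module; `r = u` and `r = 1 - u` pick out the two
components of `x · c`, so `x · c = 0`. -/

namespace Matrix

variable {K m : Type*} [CommRing K] [Fintype m] {A : Matrix m m K} {lam : K}

theorem vecMul_dotProduct_vecMul_of_mul_transpose_eq_smul [DecidableEq m]
    (hA : A * Aᵀ = lam • 1) (v w : m → K) : (v ᵥ* A) ⬝ᵥ (w ᵥ* A) = lam * (v ⬝ᵥ w) := by
  rw [← dotProduct_mulVec, ← mulVec_transpose, mulVec_mulVec, hA, smul_mulVec, one_mulVec,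
    dotProduct_smul, smul_eq_mul]

theorem isUnit_of_mul_transpose_eq_smul [DecidableEq m] (hlam : IsUnit lam)
    (hA : A * Aᵀ = lam • 1) : IsUnit A :=
  isUnit_iff_exists_inv.2 ⟨(↑hlam.unit⁻¹ : K) • Aᵀ, by
    rw [Matrix.mul_smul, hA, smul_smul, hlam.val_inv_mul, one_smul]⟩

end Matrix

lemma dec_mk (f : Polynomial (ZMod 9)) : dec (Ideal.Quotient.mk _ f) = (f.eval 1, f.eval 0) := rfl

lemma dec_uu : dec uu = (1, 0) := by simp [uu, dec_mk]

lemma dec_ι (a : ZMod 9) : dec (ι a) = (a, a) := by simp [ι, dec_mk]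

lemma dec_injective : Function.Injective dec := by
  refine (injective_iff_map_eq_zero dec).2 fun r hr => ?_
  obtain ⟨f, rfl⟩ := Ideal.Quotient.mk_surjective r
  simp only [dec_mk, Prod.mk_eq_zero] at hr
  have hX : X - C (0 : ZMod 9) ∣ f := dvd_iff_isRoot.2 hr.2
  have hX1 : X - C (1 : ZMod 9) ∣ f := dvd_iff_isRoot.2 hr.1
  have hcop : IsCoprime (X - C (0 : ZMod 9)) (X - C 1) := isCoprime_X_sub_C_of_isUnit_sub (by simp)
  refine Ideal.Quotient.eq_zero_iff_mem.2 (Ideal.mem_span_singleton.2 ?_)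
  convert hcop.mul_dvd hX hX1 using 1
  simp only [map_zero, map_one, sub_zero]
  ring

lemma dec_surjective : Function.Surjective dec := fun p =>
  ⟨ι p.1 * uu + ι p.2 * (1 - uu), by simp [dec_uu, dec_ι, Prod.ext_iff]⟩

def R9.trace : R9 →+ ZMod 9 :=
  (AddMonoidHom.coprod (AddMonoidHom.id _) (AddMonoidHom.id _)).comp dec.toAddMonoidHom

@[simp]
lemma R9.trace_apply (r : R9) : R9.trace r = (dec r).1 + (dec r).2 := rfl

lemma R9.eq_zero_of_forall_trace_mul_eq_zero {s : R9} (hs : ∀ r, R9.trace (r * s) = 0) :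
    s = 0 := by
  have h1 := hs uu
  have h2 := hs (1 - uu)
  simp only [R9.trace_apply, map_mul, map_sub, map_one, dec_uu, Prod.fst_mul, Prod.snd_mul,
    Prod.fst_sub, Prod.snd_sub, Prod.fst_one, Prod.snd_one] at h1 h2
  exact dec_injective (by ext <;> simp_all)

section Gray

variable {A : Matrix (Fin 2) (Fin 2) (ZMod 9)} {lam : ZMod 9}

lemma grayCoord_dotProduct (hA : A * A.transpose = lam • 1) (r s : R9) :
    grayCoord A r ⬝ᵥ grayCoord A s = lam * R9.trace (r * s) := by
  rw [grayCoord, grayCoord, Matrix.vecMul_dotProduct_vecMul_of_mul_transpose_eq_smul hA]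
  simp [dotProduct, Fin.sum_univ_two]

lemma sum_gray_mul_gray (hA : A * A.transpose = lam • 1) {n : ℕ} (x c : Fin n → R9) :
    ∑ p, gray n A x p * gray n A c p = lam * R9.trace (∑ i, x i * c i) := by
  simp only [Fintype.sum_prod_type, map_sum, Finset.mul_sum]
  exact Finset.sum_congr rfl fun i _ => grayCoord_dotProduct hA (x i) (c i)

lemma grayCoord_surjective (hlam : IsUnit lam) (hA : A * A.transpose = lam • 1) :
    Function.Surjective (grayCoord A) := by
  intro v
  obtain ⟨w, rfl⟩ :=
    Matrix.vecMul_surjective_iff_isUnit.2 (Matrix.isUnit_of_mul_transpose_eq_smul hlam hA) v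
  obtain ⟨r, hr⟩ := dec_surjective (w 0, w 1)
  refine ⟨r, ?_⟩
  rw [grayCoord, hr]
  congr 1
  ext j; fin_cases j <;> rfl

lemma gray_surjective (hlam : IsUnit lam) (hA : A * A.transpose = lam • 1) (n : ℕ) :
    Function.Surjective (gray n A) := by
  intro z
  choose x hx using fun i => grayCoord_surjective hlam hA fun j => z (i, j)
  exact ⟨x, funext fun p => congrFun (hx p.1) p.2⟩

theorem gray_image_dualR (hlam : IsUnit lam) (hA : A * A.transpose = lam • 1) {n : ℕ}
    (C : Submodule R9 (Fin n → R9)) : gray n A '' dualR n C = dualZ (gray n A '' C) := by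
  ext z
  constructor
  · rintro ⟨x, hx, rfl⟩ _ ⟨c, hc, rfl⟩
    rw [sum_gray_mul_gray hA, hx c hc, map_zero, mul_zero]
  · intro hz
    obtain ⟨x, rfl⟩ := gray_surjective hlam hA n z
    refine ⟨x, fun c hc => R9.eq_zero_of_forall_trace_mul_eq_zero fun r => ?_, rfl⟩
    have h := hz _ ⟨r • c, C.smul_mem r hc, rfl⟩
    rw [sum_gray_mul_gray hA] at h
    simpa [Finset.mul_sum, mul_left_comm] using hlam.mul_right_eq_zero.1 h

end Gray

theorem stmt8 (n : ℕ) (A : Matrix (Fin 2) (Fin 2) (ZMod 9)) (lam : ZMod 9)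
    (hlam : IsUnit lam) (hA : A * A.transpose = lam • (1 : Matrix (Fin 2) (Fin 2) (ZMod 9)))
    (C : Submodule R9 (Fin n → R9)) :
    gray n A '' dualR n (C : Set (Fin n → R9)) = dualZ (gray n A '' (C : Set (Fin n → R9))) ∧
    ((C : Set (Fin n → R9)) = dualR n (C : Set (Fin n → R9)) →
      gray n A '' (C : Set (Fin n → R9)) = dualZ (gray n A '' (C : Set (Fin n → R9)))) :=
  ⟨gray_image_dualR hlam hA C, fun hself =>
    (congrArg (gray n A '' ·) hself).trans (gray_image_dualR hlam hA C)⟩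
end
end

section
/- A linear code C = u·C₁ ⊕ (1-u)·C₂ of length n over R = ℤ₉[u]/(u²-u) is cyclic (invariant under the cyclic shift) if and only if C₁ and C₂ are both cyclic codes over ℤ₉. -/
open Polynomial

noncomputable section

/-- The word `u·x + (1-u)·y ∈ Rⁿ` built from `x, y ∈ ℤ₉ⁿ`. -/
def combine (n : ℕ) (x y : Fin n → ZMod 9) : Fin n → R9 :=
  fun i => uu * ι (x i) + (1 - uu) * ι (y i)

/-- `C₁ = {x ∈ ℤ₉ⁿ : ∃ y, ux + (1-u)y ∈ C}`. -/
def comp1 (n : ℕ) (S : Set (Fin n → R9)) : Set (Fin n → ZMod 9) :=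
  {x | ∃ y, combine n x y ∈ S}

/-- `C₂ = {y ∈ ℤ₉ⁿ : ∃ x, ux + (1-u)y ∈ C}`. -/
def comp2 (n : ℕ) (S : Set (Fin n → R9)) : Set (Fin n → ZMod 9) :=
  {y | ∃ x, combine n x y ∈ S}

/-- The cyclic shift `T(c₀, …, c_{n-1}) = (c_{n-1}, c₀, …, c_{n-2})`. -/
def shift {α : Type*} {n : ℕ} [NeZero n] (c : Fin n → α) : Fin n → α :=
  fun i => c (i - 1)

/-- The inverse cyclic shift. -/
def unshift {α : Type*} {n : ℕ} [NeZero n] (c : Fin n → α) : Fin n → α :=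
  fun i => c (i + 1)

lemma shift_unshift {α : Type*} {n : ℕ} [NeZero n] (c : Fin n → α) :
    shift (unshift c) = c := by
  funext i; show c (i - 1 + 1) = c i; rw [sub_add_cancel]

lemma unshift_shift {α : Type*} {n : ℕ} [NeZero n] (c : Fin n → α) :
    unshift (shift c) = c := by
  funext i; show c (i + 1 - 1) = c i; rw [add_sub_cancel_right]

lemma shift_combine {n : ℕ} [NeZero n] (x y : Fin n → ZMod 9) :
    shift (combine n x y) = combine n (shift x) (shift y) := rfl

lemma unshift_combine {n : ℕ} [NeZero n] (x y : Fin n → ZMod 9) :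
    unshift (combine n x y) = combine n (unshift x) (unshift y) := rfl

lemma uu_sq : uu * uu = uu := by
  unfold uu
  rw [← map_mul, Ideal.Quotient.eq, ← sq]
  exact Ideal.mem_span_singleton_self _

lemma uu_pow (k : ℕ) : uu ^ (k + 1) = uu := by
  induction k with
  | zero => simp
  | succ k ih => rw [pow_succ, ih, uu_sq]

def pi1 : R9 →+* ZMod 9 :=
  Ideal.Quotient.lift _ (evalRingHom (1 : ZMod 9)) (by
    intro p hp
    rw [Ideal.mem_span_singleton] at hp
    obtain ⟨q, rfl⟩ := hp
    simp)

def pi2 : R9 →+* ZMod 9 :=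
  Ideal.Quotient.lift _ (evalRingHom (0 : ZMod 9)) (by
    intro p hp
    rw [Ideal.mem_span_singleton] at hp
    obtain ⟨q, rfl⟩ := hp
    simp)

lemma r_decomp (r : R9) : uu * ι (pi1 r) + (1 - uu) * ι (pi2 r) = r := by
  obtain ⟨p, rfl⟩ := Ideal.Quotient.mk_surjective r
  induction p using Polynomial.induction_on with
  | C a =>
      show uu * ι (pi1 (ι a)) + (1 - uu) * ι (pi2 (ι a)) = ι a
      simp [pi1, pi2, ι]
      ring
  | add p q hp hq =>
      rw [map_add, map_add, map_add, map_add, map_add]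
      rw [mul_add, mul_add]
      rw [show uu * ι (pi1 ((Ideal.Quotient.mk _) p)) + uu * ι (pi1 ((Ideal.Quotient.mk _) q)) +
        ((1 - uu) * ι (pi2 ((Ideal.Quotient.mk _) p)) + (1 - uu) * ι (pi2 ((Ideal.Quotient.mk _) q))) =
        (uu * ι (pi1 ((Ideal.Quotient.mk _) p)) + (1 - uu) * ι (pi2 ((Ideal.Quotient.mk _) p))) +
        (uu * ι (pi1 ((Ideal.Quotient.mk _) q)) + (1 - uu) * ι (pi2 ((Ideal.Quotient.mk _) q))) by ring]
      rw [hp, hq]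
  | monomial k a _ =>
      have h1 : pi1 ((Ideal.Quotient.mk _) (Polynomial.C a * X ^ (k+1))) = a := by
        simp [pi1]
      have h2 : pi2 ((Ideal.Quotient.mk _) (Polynomial.C a * X ^ (k+1))) = 0 := by
        simp [pi2]
      rw [h1, h2, map_zero, mul_zero, add_zero]
      rw [map_mul, map_pow]
      show uu * ι a = ι a * uu ^ (k+1)
      rw [uu_pow, mul_comm]

lemma combine_decomp {n : ℕ} (c : Fin n → R9) :
    combine n (fun i => pi1 (c i)) (fun i => pi2 (c i)) = c :=
  funext fun i => r_decomp (c i)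

lemma glue (a y x b : ZMod 9) :
    uu * (uu * ι a + (1 - uu) * ι y) + (1 - uu) * (uu * ι x + (1 - uu) * ι b) =
      uu * ι a + (1 - uu) * ι b := by
  linear_combination (ι a - ι y - ι x + ι b) * uu_sq

lemma decomp_mem {n : ℕ} (C : Submodule R9 (Fin n → R9)) (x y : Fin n → ZMod 9)
    (h1 : x ∈ comp1 n (C : Set (Fin n → R9))) (h2 : y ∈ comp2 n (C : Set (Fin n → R9))) :
    combine n x y ∈ C := by
  obtain ⟨y', hy'⟩ := h1
  obtain ⟨x', hx'⟩ := h2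
  have key : combine n x y = uu • combine n x y' + (1 - uu) • combine n x' y := by
    funext i
    simp only [Pi.add_apply, Pi.smul_apply, smul_eq_mul, combine]
    exact (glue _ _ _ _).symm
  rw [key]
  exact C.add_mem (C.smul_mem _ hy') (C.smul_mem _ hx')

lemma image_eq_iff {α : Type*} (f g : α → α) (hfg : ∀ a, f (g a) = a) (hgf : ∀ a, g (f a) = a)
    (S : Set α) : f '' S = S ↔ (∀ a ∈ S, f a ∈ S) ∧ (∀ a ∈ S, g a ∈ S) := by
  constructor
  · intro h
    refine ⟨fun a ha => ?_, fun a ha => ?_⟩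
    · rw [← h]; exact ⟨a, ha, rfl⟩
    · rw [← h] at ha; obtain ⟨b, hb, rfl⟩ := ha; rw [hgf]; exact hb
  · rintro ⟨h1, h2⟩
    ext a
    constructor
    · rintro ⟨b, hb, rfl⟩; exact h1 b hb
    · intro ha; exact ⟨g a, h2 a ha, hfg a⟩

theorem stmt12 (n : ℕ) [NeZero n] (C : Submodule R9 (Fin n → R9)) :
    shift '' (C : Set (Fin n → R9)) = (C : Set (Fin n → R9)) ↔
      (shift '' comp1 n (C : Set (Fin n → R9)) = comp1 n (C : Set (Fin n → R9)) ∧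
       shift '' comp2 n (C : Set (Fin n → R9)) = comp2 n (C : Set (Fin n → R9))) := by
  rw [image_eq_iff shift unshift shift_unshift unshift_shift,
      image_eq_iff shift unshift shift_unshift unshift_shift,
      image_eq_iff shift unshift shift_unshift unshift_shift]
  constructor
  · rintro ⟨hs, hu⟩
    refine ⟨⟨fun x hx => ?_, fun x hx => ?_⟩, fun y hy => ?_, fun y hy => ?_⟩
    · obtain ⟨y, hy⟩ := hx
      exact ⟨shift y, hs _ hy⟩
    · obtain ⟨y, hy⟩ := hx
      exact ⟨unshift y, hu _ hy⟩
    · obtain ⟨x, hx⟩ := hy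
      exact ⟨shift x, hs _ hx⟩
    · obtain ⟨x, hx⟩ := hy
      exact ⟨unshift x, hu _ hx⟩
  · rintro ⟨⟨h1s, h1u⟩, h2s, h2u⟩
    have hmem : ∀ c ∈ C, (fun i => pi1 (c i)) ∈ comp1 n (C : Set (Fin n → R9)) ∧
        (fun i => pi2 (c i)) ∈ comp2 n (C : Set (Fin n → R9)) := by
      intro c hc
      constructor
      · exact ⟨fun i => pi2 (c i), by rw [combine_decomp]; exact hc⟩
      · exact ⟨fun i => pi1 (c i), by rw [combine_decomp]; exact hc⟩
    refine ⟨fun c hc => ?_, fun c hc => ?_⟩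
    · obtain ⟨m1, m2⟩ := hmem c hc
      have : shift c = combine n (shift fun i => pi1 (c i)) (shift fun i => pi2 (c i)) := by
        rw [← shift_combine, combine_decomp]
      rw [this]
      exact decomp_mem C _ _ (h1s _ m1) (h2s _ m2)
    · obtain ⟨m1, m2⟩ := hmem c hc
      have : unshift c = combine n (unshift fun i => pi1 (c i)) (unshift fun i => pi2 (c i)) := by
        rw [← unshift_combine, combine_decomp]
      rw [this]
      exact decomp_mem C _ _ (h1u _ m1) (h2u _ m2)
end
end

section
/- Let n be coprime to 3. Every ideal of the quotient ring R[X]/(Xⁿ - 1), where R = ℤ₉[u]/(u²-u), is principal. -/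
open Polynomial

noncomputable section

instance : CommRing R9 := Ideal.Quotient.commRing _

/-- The quotient ring `R[X]/(Xⁿ - 1)`. -/
abbrev Rn (n : ℕ) : Type := Polynomial R9 ⧸ Ideal.span {(X : Polynomial R9) ^ n - 1}


/-!
Since `9 = 0`, the element `3` is nilpotent in `A = R[X]/(Xⁿ - 1)`. The ring `A/(3)` is finite of
characteristic `3`, and its Frobenius is surjective: `u³ = u`, and `X = (Xᵐ)³` for `3m ≡ 1 mod n`.
So `A/(3)` is reduced, hence semisimple. A ring that is semisimple modulo a nilpotent `t` is a
principal ideal ring: a prime `P` contains `t`, the image of `P` is generated by an idempotent,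
which lifts to an idempotent `e`, and `P = (e, t) = (e + t (1 - e))`.
-/

theorem Ideal.span_pair_eq_span_singleton_of_isIdempotentElem {A : Type*} [CommRing A] {e : A}
    (he : IsIdempotentElem e) (t : A) : Ideal.span {e, t} = Ideal.span {e + t * (1 - e)} := by
  refine le_antisymm ?_ ?_
  · rw [Ideal.span_le, Set.insert_subset_iff, Set.singleton_subset_iff]
    exact ⟨Ideal.mem_span_singleton'.mpr ⟨e, by linear_combination (1 - t) * he.eq⟩,
      Ideal.mem_span_singleton'.mpr
        ⟨t * e + 1 - e, by linear_combination (2 * t - t * t - 1) * he.eq⟩⟩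
  · rw [Ideal.span_singleton_le_iff_mem]
    exact Ideal.add_mem _ (Ideal.subset_span (by simp))
      (Ideal.mul_mem_right _ _ (Ideal.subset_span (by simp)))

theorem IsPrincipalIdealRing.of_isNilpotent_of_isSemisimpleRing_quotient {A : Type*} [CommRing A]
    {t : A} (ht : IsNilpotent t) [IsSemisimpleRing (A ⧸ Ideal.span {t})] :
    IsPrincipalIdealRing A := by
  refine .of_prime fun P hP => ?_
  set π := Ideal.Quotient.mk (Ideal.span {t})
  have hπ : Function.Surjective π := Ideal.Quotient.mk_surjective
  have hker : RingHom.ker π = Ideal.span {t} := Ideal.mk_ker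
  obtain ⟨ē, hē, hPē⟩ := IsSemisimpleRing.ideal_eq_span_idempotent (P.map π)
  have hker_nil : ∀ x ∈ RingHom.ker π, IsNilpotent x := by
    rw [hker]
    intro x hx
    obtain ⟨c, rfl⟩ := Ideal.mem_span_singleton'.mp hx
    exact (Commute.all c t).isNilpotent_mul_left ht
  obtain ⟨e, he, rfl⟩ := exists_isIdempotentElem_eq_of_ker_isNilpotent π hker_nil ē (hπ ē) hē
  have hPet : P = Ideal.span {e, t} := calc
    P = Ideal.comap π (P.map π) := by
      rw [Ideal.comap_map_of_surjective' π hπ, hker, left_eq_sup, Ideal.span_singleton_le_iff_mem]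
      exact nilpotent_iff_mem_prime.mp ht P hP
    _ = Ideal.comap π ((Ideal.span {e}).map π) := by rw [hPē, Ideal.map_span, Set.image_singleton]
    _ = Ideal.span {e, t} := by
      rw [Ideal.comap_map_of_surjective' π hπ, hker, ← Ideal.span_union, Set.singleton_union]
  exact ⟨⟨_, hPet.trans (Ideal.span_pair_eq_span_singleton_of_isIdempotentElem he t)⟩⟩

theorem charP_quotient_span_natCast {A : Type*} [CommRing A] (p : ℕ) [Fact p.Prime]
    [h : Nontrivial (A ⧸ Ideal.span {(p : A)})] : CharP (A ⧸ Ideal.span {(p : A)}) p :=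
  CharP.quotient A p fun hp =>
    Ideal.Quotient.nontrivial_iff.mp h (Ideal.span_singleton_eq_top.mpr hp)

theorem isSemisimpleRing_of_surjective_frobenius {A : Type*} [CommRing A] [Finite A] (p : ℕ)
    [hp : Fact p.Prime] [CharP A p] (h : Function.Surjective (frobenius A p)) :
    IsSemisimpleRing A :=
  have : IsArtinianRing A := isArtinian_of_finite
  have : IsReduced A := (isReduced_iff_pow_one_lt p hp.out.one_lt).mpr fun x hx =>
    Finite.injective_iff_surjective.mpr h (by rw [frobenius_def, hx, map_zero])
  IsArtinianRing.isSemisimpleRing_of_isReduced A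

theorem surjective_frobenius_of_surjective_polynomial {S B : Type*} [CommRing S] [CommRing B]
    (p : ℕ) [ExpChar B p] {n : ℕ} (hpn : p.Coprime n) (g : S[X] →+* B)
    (hg : Function.Surjective g) (hC : ∀ s : S, frobenius B p (g (C s)) = g (C s))
    (hX : g X ^ n = 1) : Function.Surjective (frobenius B p) := by
  obtain ⟨m, hm⟩ := exists_pow_eq_self_of_coprime
    (hpn.coprime_dvd_right (orderOf_dvd_of_pow_eq_one hX))
  have hgm : (frobenius B p).comp (g.comp (expand S m).toRingHom) = g := by
    refine Polynomial.ringHom_ext (fun s => by simpa using hC s) ?_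
    simp only [RingHom.comp_apply, AlgHom.toRingHom_eq_coe, RingHom.coe_coe, expand_X, map_pow,
      frobenius_def]
    rw [← pow_mul, pow_mul, hm]
  intro b
  obtain ⟨q, rfl⟩ := hg b
  exact ⟨g (expand S m q), congr($hgm q)⟩

theorem isSemisimpleRing_adjoinRoot_X_pow_sub_one_quotient {S : Type*} [CommRing S] [Finite S]
    (p : ℕ) [hp : Fact p.Prime] (hS : ∀ s : S, s ^ p - s ∈ Ideal.span {(p : S)}) {n : ℕ}
    (hn : n.Coprime p) :
    IsSemisimpleRing
      (AdjoinRoot ((X : S[X]) ^ n - 1) ⧸ Ideal.span {(p : AdjoinRoot ((X : S[X]) ^ n - 1))}) := by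
  rcases subsingleton_or_nontrivial
    (AdjoinRoot ((X : S[X]) ^ n - 1) ⧸ Ideal.span {(p : AdjoinRoot ((X : S[X]) ^ n - 1))})
    with h | h
  · infer_instance
  have hn0 : n ≠ 0 := by
    rintro rfl
    exact hp.out.one_lt.ne' (Nat.coprime_zero_left p |>.mp hn)
  have : Module.Finite S (AdjoinRoot ((X : S[X]) ^ n - 1)) :=
    (monic_X_pow_sub_C 1 hn0).finite_adjoinRoot
  have : Finite (AdjoinRoot ((X : S[X]) ^ n - 1)) := Module.finite_of_finite S
  have : Finite
      (AdjoinRoot ((X : S[X]) ^ n - 1) ⧸ Ideal.span {(p : AdjoinRoot ((X : S[X]) ^ n - 1))}) :=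
    Finite.of_surjective _ Ideal.Quotient.mk_surjective
  have := charP_quotient_span_natCast (A := AdjoinRoot ((X : S[X]) ^ n - 1)) p
  refine isSemisimpleRing_of_surjective_frobenius p
    (surjective_frobenius_of_surjective_polynomial p hn.symm
      ((Ideal.Quotient.mk _).comp (AdjoinRoot.mk _))
      (Ideal.Quotient.mk_surjective.comp AdjoinRoot.mk_surjective) (fun s => ?_) ?_)
  · obtain ⟨c, hc⟩ := Ideal.mem_span_singleton'.mp (hS s)
    rw [frobenius_def, ← map_pow, ← sub_eq_zero, ← map_sub, ← map_pow, ← map_sub, ← hc]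
    simp
  · have hroot := AdjoinRoot.mk_self (f := (X : S[X]) ^ n - 1)
    rw [map_sub, map_pow, map_one, sub_eq_zero] at hroot
    rw [RingHom.comp_apply, ← map_pow, hroot, map_one]

theorem isPrincipalIdealRing_adjoinRoot_X_pow_sub_one {S : Type*} [CommRing S] [Finite S]
    (p : ℕ) [Fact p.Prime] (hpS : IsNilpotent (p : S))
    (hS : ∀ s : S, s ^ p - s ∈ Ideal.span {(p : S)}) {n : ℕ} (hn : n.Coprime p) :
    IsPrincipalIdealRing (AdjoinRoot ((X : S[X]) ^ n - 1)) :=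
  have := isSemisimpleRing_adjoinRoot_X_pow_sub_one_quotient p hS hn
  .of_isNilpotent_of_isSemisimpleRing_quotient (by simpa using hpS.map (AdjoinRoot.of _))

theorem isIdempotentElem_uu : IsIdempotentElem uu := by
  rw [IsIdempotentElem, uu, ← map_mul, Ideal.Quotient.eq]
  exact Ideal.subset_span (by rw [← sq]; rfl)

theorem frobenius_comp_eq_of_R9 {B : Type*} [CommRing B] [CharP B 3] (f : R9 →+* B) :
    (frobenius B 3).comp f = f := by
  refine Ideal.Quotient.ringHom_ext (Polynomial.ringHom_ext' (RingHom.ext_zmod _ _) ?_)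
  change frobenius B 3 (f uu) = f uu
  rw [frobenius_def, pow_succ, sq, ← map_mul, ← map_mul, isIdempotentElem_uu.eq,
    isIdempotentElem_uu.eq]

theorem pow_three_sub_self_mem_span_three (s : R9) : s ^ 3 - s ∈ Ideal.span {(3 : R9)} := by
  rw [← Ideal.Quotient.eq_zero_iff_mem, map_sub, map_pow, sub_eq_zero]
  rcases subsingleton_or_nontrivial (R9 ⧸ Ideal.span {(3 : R9)}) with h | h
  · exact Subsingleton.elim _ _
  have := charP_quotient_span_natCast (A := R9) 3
  exact congr($(frobenius_comp_eq_of_R9 (Ideal.Quotient.mk _)) s)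

instance : Finite R9 :=
  have : Module.Finite (ZMod 9) R9 :=
    (monic_X_pow_sub (degree_X_le.trans_lt (by norm_num))).finite_quotient
  Module.finite_of_finite (ZMod 9)

theorem isNilpotent_three_R9 : IsNilpotent (3 : R9) := by
  have h9 : (9 : R9) = 0 := by rw [← map_ofNat ι 9, show (9 : ZMod 9) = 0 from rfl, map_zero]
  exact ⟨2, by rw [← h9]; norm_num⟩

theorem stmt13 (n : ℕ) (hn : Nat.Coprime n 3) (I : Ideal (Rn n)) :
    Submodule.IsPrincipal I :=
  (isPrincipalIdealRing_adjoinRoot_X_pow_sub_one 3 (by exact_mod_cast isNilpotent_three_R9)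
    (by exact_mod_cast pow_three_sub_self_mem_span_three) hn).principal I

end
end
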